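/- For every integer n ≥ 0 and every real number t with |t| < 1, the series ∑_{j=0}^∞ t^j (j+1)^n converges and equals A_n(t)/(1-t)^{n+1}. -/

import Mathlib

/-!
Worpitzky's identity `(j + 1) ^ n = ∑_σ C(j + n - asc σ, n)`: sorting a map
`f : Fin n → Fin (j + 1)` by value, ties broken by decreasing position, gives the unique `σ`
such that `f ∘ σ` is weakly increasing and strictly increasing across every ascent of `σ`.
Adding to the `i`-th value the number of non-ascents before `i` makes these sequences exactly
the strictly increasing maps `Fin n → Fin (j + n - asc σ)`. Multiplying by `t ^ j` and summing
over `j`, each permutation contributes `∑_j C(j + n - k, n) t ^ j = t ^ k / (1 - t) ^ (n + 1)`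
with `k = asc σ`.
-/

open scoped Classical

noncomputable def ascentCount {n : ℕ} (π : Equiv.Perm (Fin n)) : ℕ :=
  ((Finset.range (n - 1)).filter (fun j =>
    ∃ h : j + 1 < n, π ⟨j, Nat.lt_of_succ_lt h⟩ < π ⟨j + 1, h⟩)).card

noncomputable def eulerian (n k : ℕ) : ℕ :=
  (Finset.univ.filter (fun π : Equiv.Perm (Fin n) => ascentCount π = k)).card

noncomputable def eulerianPoly (n : ℕ) (t : ℝ) : ℝ :=
  if n = 0 then 1 else ∑ k ∈ Finset.range n, (eulerian n k : ℝ) * t ^ k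

open Finset

theorem Tuple.sort_eq_iff_strictMono_of_injective {n : ℕ} {α : Type*} [LinearOrder α]
    {f : Fin n → α} (hf : Function.Injective f) {σ : Equiv.Perm (Fin n)} :
    Tuple.sort f = σ ↔ StrictMono (f ∘ σ) := by
  rw [eq_comm, Tuple.eq_sort_iff]
  refine ⟨fun h => h.1.strictMono_of_injective (hf.comp σ.injective),
    fun h => ⟨h.monotone, fun i j hij hfij => absurd (σ.injective (hf hfij)) hij.ne⟩⟩

theorem Fin.add_sub_le_of_strictMono {n : ℕ} {f : Fin n → ℕ} (hf : StrictMono f) {a b : Fin n}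
    (hab : a ≤ b) : f a + (b - a) ≤ f b := by
  have h := card_le_card_of_injOn f (s := Icc a b) (t := Icc (f a) (f b))
    (fun i hi => by
      simp only [coe_Icc, Set.mem_Icc] at hi ⊢
      exact ⟨hf.monotone hi.1, hf.monotone hi.2⟩) hf.injective.injOn
  rw [Fin.card_Icc, Nat.card_Icc] at h
  have : (a : ℕ) ≤ b := hab
  omega

theorem Nat.card_orderEmbedding_fin (k m : ℕ) : Nat.card (Fin k ↪o Fin m) = m.choose k := by
  rw [Nat.card_congr Set.powersetCard.ofFinEmbEquiv, Set.powersetCard.card,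
    Nat.card_eq_fintype_card, Fintype.card_fin]

namespace Nat

variable (p : ℕ → Prop) [DecidablePred p]

theorem count_not_add_count (n : ℕ) : count (¬p ·) n + count p n = n := by
  induction n with
  | zero => simp
  | succ n ih => rw [count_succ, count_succ]; split_ifs <;> omega

theorem count_le_count_add_sub {a b : ℕ} (hab : a ≤ b) : count p b ≤ count p a + (b - a) := by
  obtain ⟨d, rfl⟩ := Nat.exists_eq_add_of_le hab
  rw [count_add, Nat.add_sub_cancel_left]
  exact Nat.add_le_add_left (count_le _) _

end Nat

def MonotoneStrictAt (p : ℕ → Prop) {N : ℕ} {α : Type*} [Preorder α]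
    (g : Fin (N + 1) → α) : Prop :=
  ∀ i : Fin N, g i.castSucc ≤ g i.succ ∧ (p i → g i.castSucc < g i.succ)

section MonotoneStrictAt

variable (p : ℕ → Prop) [DecidablePred p]

theorem monotoneStrictAt_iff_strictMono_add_count_not {N m : ℕ} (g : Fin (N + 1) → Fin m) :
    MonotoneStrictAt p g ↔ StrictMono fun i => (g i : ℕ) + Nat.count (¬p ·) i := by
  rw [Fin.strictMono_iff_lt_succ]
  refine forall_congr' fun i => ?_
  simp only [Fin.val_castSucc, Fin.val_succ, Nat.count_succ, Fin.le_def, Fin.lt_def]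
  by_cases h : p i <;> simp only [h, not_true_eq_false, not_false_eq_true, if_true, if_false,
    true_implies, false_implies, and_true, add_zero] <;> omega

theorem count_not_le_orderEmbedding_apply {N M : ℕ} (h : Fin (N + 1) ↪o Fin M)
    (i : Fin (N + 1)) : Nat.count (¬p ·) i ≤ h i := by
  have := Fin.add_sub_le_of_strictMono (Fin.val_strictMono.comp h.strictMono) (Fin.zero_le i)
  have := Nat.count_le (¬p ·) (n := i)
  simp only [Function.comp_apply, Fin.val_zero, Nat.sub_zero] at *
  omega

def monotoneStrictAtEquivOrderEmbedding (N j : ℕ) :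
    {g : Fin (N + 1) → Fin (j + 1) // MonotoneStrictAt p g} ≃
      (Fin (N + 1) ↪o Fin (j + 1 + Nat.count (¬p ·) N)) where
  toFun g := OrderEmbedding.ofStrictMono
    (fun i => ⟨g.1 i + Nat.count (¬p ·) i, by
      have := Nat.count_monotone (¬p ·) (Nat.le_of_lt_succ i.isLt)
      have := Nat.lt_succ_iff.1 (g.1 i).isLt
      omega⟩)
    ((monotoneStrictAt_iff_strictMono_add_count_not p g.1).1 g.2)
  invFun h := ⟨fun i => ⟨h i - Nat.count (¬p ·) i, by
      have := Fin.add_sub_le_of_strictMono (Fin.val_strictMono.comp h.strictMono)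
        (Fin.le_last i)
      have := Nat.count_le_count_add_sub (¬p ·) (Nat.le_of_lt_succ i.isLt)
      have := (h (Fin.last N)).isLt
      simp only [Function.comp_apply, Fin.val_last] at *
      omega⟩, by
    rw [monotoneStrictAt_iff_strictMono_add_count_not]
    simp only [Nat.sub_add_cancel (count_not_le_orderEmbedding_apply p h _)]
    exact fun _ _ hab => h.strictMono hab⟩
  left_inv g := by ext; simp [OrderEmbedding.ofStrictMono]
  right_inv h := by ext; simp [Nat.sub_add_cancel (count_not_le_orderEmbedding_apply p h _)]

theorem card_filter_monotoneStrictAt (N j : ℕ) :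
    #{g : Fin (N + 1) → Fin (j + 1) | MonotoneStrictAt p g} =
      (j + (N + 1) - Nat.count p N).choose (N + 1) := by
  rw [← Fintype.card_subtype, ← Nat.card_eq_fintype_card,
    Nat.card_congr (monotoneStrictAtEquivOrderEmbedding p N j), Nat.card_orderEmbedding_fin]
  have := Nat.count_not_add_count p N
  congr 1
  omega

end MonotoneStrictAt

def IsAscent {n : ℕ} (σ : Equiv.Perm (Fin n)) (i : ℕ) : Prop :=
  ∃ h : i + 1 < n, σ ⟨i, Nat.lt_of_succ_lt h⟩ < σ ⟨i + 1, h⟩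

theorem ascentCount_eq_count {n : ℕ} (σ : Equiv.Perm (Fin n)) :
    ascentCount σ = Nat.count (IsAscent σ) (n - 1) := by
  rw [Nat.count_eq_card_filter_range, ascentCount]
  congr

theorem ascentCount_le {n : ℕ} (σ : Equiv.Perm (Fin n)) : ascentCount σ ≤ n - 1 :=
  (ascentCount_eq_count σ).trans_le (Nat.count_le _)

theorem isAscent_iff {N : ℕ} (σ : Equiv.Perm (Fin (N + 1))) (i : Fin N) :
    IsAscent σ i ↔ σ i.castSucc < σ i.succ :=
  ⟨fun ⟨_, h⟩ => h, fun h => ⟨by omega, h⟩⟩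

def sortKey {n : ℕ} {α : Type*} (f : Fin n → α) : Fin n → α ×ₗ (Fin n)ᵒᵈ :=
  fun i => toLex (f i, OrderDual.toDual i)

theorem sortKey_injective {n : ℕ} {α : Type*} (f : Fin n → α) :
    Function.Injective (sortKey f) :=
  fun a b h => by simpa [sortKey] using congrArg (fun x => (ofLex x).2) h

theorem sort_sortKey_eq_iff {N : ℕ} {α : Type*} [LinearOrder α] (f : Fin (N + 1) → α)
    (σ : Equiv.Perm (Fin (N + 1))) :
    Tuple.sort (sortKey f) = σ ↔ MonotoneStrictAt (IsAscent σ) (f ∘ σ) := by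
  rw [Tuple.sort_eq_iff_strictMono_of_injective (sortKey_injective f), Fin.strictMono_iff_lt_succ]
  refine forall_congr' fun i => ?_
  have hne : σ i.castSucc ≠ σ i.succ := σ.injective.ne Fin.castSucc_lt_succ.ne
  simp only [Function.comp_apply, sortKey, Prod.Lex.toLex_lt_toLex, OrderDual.toDual_lt_toDual,
    isAscent_iff]
  rcases hne.lt_or_gt with hlt | hgt
  · simpa [hlt, hlt.not_gt] using le_of_lt
  · simp [hgt, hgt.not_gt, le_iff_lt_or_eq]

theorem card_filter_sort_sortKey_eq (N j : ℕ) (σ : Equiv.Perm (Fin (N + 1))) :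
    #{f : Fin (N + 1) → Fin (j + 1) | Tuple.sort (sortKey f) = σ} =
      (j + (N + 1) - ascentCount σ).choose (N + 1) := by
  rw [ascentCount_eq_count, Nat.add_sub_cancel, ← card_filter_monotoneStrictAt]
  exact card_equiv (σ.symm.arrowCongr (Equiv.refl _)) fun f => by
    simp only [mem_filter, mem_univ, true_and, sort_sortKey_eq_iff]
    rfl

theorem pow_eq_sum_perm_choose_sub_ascentCount (n j : ℕ) :
    (j + 1) ^ n = ∑ σ : Equiv.Perm (Fin n), (j + n - ascentCount σ).choose n := by
  cases n with
  | zero => simp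
  | succ N =>
    calc (j + 1) ^ (N + 1) = #(univ : Finset (Fin (N + 1) → Fin (j + 1))) := by simp
      _ = ∑ σ, #{f : Fin (N + 1) → Fin (j + 1) | Tuple.sort (sortKey f) = σ} :=
        card_eq_sum_card_fiberwise fun _ _ => mem_univ _
      _ = _ := sum_congr rfl fun σ _ => card_filter_sort_sortKey_eq N j σ

theorem hasSum_choose_sub_mul_geometric {𝕜 : Type*} [NormedDivisionRing 𝕜] {t : 𝕜}
    (ht : ‖t‖ < 1) {n k : ℕ} (hk : k ≤ n) :
    HasSum (fun j : ℕ => ((j + n - k).choose n : 𝕜) * t ^ j) (t ^ k / (1 - t) ^ (n + 1)) := by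
  have hshift := (hasSum_choose_mul_geometric_of_norm_lt_one n ht).mul_left (t ^ k)
  rw [← hasSum_nat_add_iff' k, sum_eq_zero fun j hj => by
    rw [Nat.choose_eq_zero_of_lt (by simp at hj; omega), Nat.cast_zero, zero_mul], sub_zero]
  have hterm (j : ℕ) :
      ((j + k + n - k).choose n : 𝕜) * t ^ (j + k) =
        t ^ k * (((j + n).choose n : 𝕜) * t ^ j) := by
    rw [Nat.add_right_comm, Nat.add_sub_cancel, pow_add, pow_mul_comm, ← mul_assoc,
      ← mul_assoc, (Nat.cast_commute _ _).eq]
  simpa only [hterm, mul_one_div] using hshift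

theorem eulerianPoly_eq_sum_perm (n : ℕ) (t : ℝ) :
    eulerianPoly n t = ∑ σ : Equiv.Perm (Fin n), t ^ ascentCount σ := by
  rcases Nat.eq_zero_or_pos n with rfl | hn
  · simp [eulerianPoly, ascentCount]
  rw [eulerianPoly, if_neg hn.ne', ← sum_fiberwise_of_maps_to (t := range n) (g := ascentCount)
    fun σ _ => mem_range.2 ((ascentCount_le σ).trans_lt (Nat.sub_lt hn one_pos))]
  refine sum_congr rfl fun k _ => ?_
  rw [sum_congr rfl fun σ hσ => by rw [(mem_filter.1 hσ).2], sum_const, nsmul_eq_mul, eulerian]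

/-- For `|t| < 1`, `∑_{j=0}^∞ t^j (j+1)^n = A_n(t)/(1-t)^{n+1}`. -/
theorem hasSum_eulerianPoly_div (n : ℕ) (t : ℝ) (ht : |t| < 1) :
    HasSum (fun j : ℕ => t ^ j * ((j : ℝ) + 1) ^ n)
      (eulerianPoly n t / (1 - t) ^ (n + 1)) := by
  have hworpitzky (j : ℕ) : t ^ j * ((j : ℝ) + 1) ^ n =
      ∑ σ : Equiv.Perm (Fin n), ((j + n - ascentCount σ).choose n : ℝ) * t ^ j := by
    rw [mul_comm, ← sum_mul]
    exact_mod_cast congrArg (fun m : ℕ => (m : ℝ) * t ^ j)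
      (pow_eq_sum_perm_choose_sub_ascentCount n j)
  simp only [hworpitzky, eulerianPoly_eq_sum_perm, sum_div]
  exact hasSum_sum fun σ _ => hasSum_choose_sub_mul_geometric (by rwa [Real.norm_eq_abs])
    ((ascentCount_le σ).trans (Nat.sub_le n 1))
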